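/- Let u: [0,Λ)^d → [0,1] be measurable. Then ∫ |(∇G_{h/2})∗u| dx ≤ C h^{−1/2} ∫ (1−u) (G_h∗u) dx, with C depending only on d. -/

import Mathlib

open Real MeasureTheory

/-- The centered Gaussian kernel of variance `h` on `ℝ^d`. -/
noncomputable def gauss (d : ℕ) (h : ℝ) (z : EuclideanSpace ℝ (Fin d)) : ℝ :=
  (2 * π * h) ^ (-(d : ℝ) / 2) * Real.exp (-‖z‖ ^ 2 / (2 * h))

/-- The gradient `∇G_h(z) = -(G_h(z)/h) z` of the Gaussian kernel. -/
noncomputable def gradGauss (d : ℕ) (h : ℝ) (z : EuclideanSpace ℝ (Fin d)) :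
    EuclideanSpace ℝ (Fin d) :=
  (-(gauss d h z) / h) • z

/-- The (vector-valued) convolution `(∇G_h∗u)(x) = ∫ u(x−z) ∇G_h(z) dz`. -/
noncomputable def gradConv (d : ℕ) (h : ℝ) (u : EuclideanSpace ℝ (Fin d) → ℝ)
    (x : EuclideanSpace ℝ (Fin d)) : EuclideanSpace ℝ (Fin d) :=
  ∫ z, u (x - z) • gradGauss d h z

/-- The fundamental cell `[0,Λ)^d` of the flat torus, as a subset of `ℝ^d`. -/
def box (d : ℕ) (Λ : ℝ) : Set (EuclideanSpace ℝ (Fin d)) :=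
  {x | ∀ i, x i ∈ Set.Ico (0:ℝ) Λ}

variable {d : ℕ}
lemma integrable_exp_neg_norm_sq {b : ℝ} (hb : 0 < b) :
    Integrable (fun z : EuclideanSpace ℝ (Fin d) => Real.exp (-b * ‖z‖ ^ 2)) := by
  have := (GaussianFourier.integrable_cexp_neg_mul_sq_norm_add
    (V := EuclideanSpace ℝ (Fin d)) (b := (b : ℂ)) (by simpa) 0 0).norm
  convert this using 2 with z
  rw [Complex.norm_exp]
  norm_num
  left
  norm_cast
lemma gauss_pos {h : ℝ} (hh : 0 < h) (z : EuclideanSpace ℝ (Fin d)) : 0 < gauss d h z := by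
  have : (0:ℝ) < 2 * π * h := by positivity
  exact mul_pos (Real.rpow_pos_of_pos this _) (Real.exp_pos _)
lemma gauss_nonneg {h : ℝ} (hh : 0 < h) (z : EuclideanSpace ℝ (Fin d)) : 0 ≤ gauss d h z :=
  (gauss_pos hh z).le
lemma gauss_neg (h : ℝ) (z : EuclideanSpace ℝ (Fin d)) : gauss d h (-z) = gauss d h z := by
  simp [gauss]
lemma continuous_gauss (h : ℝ) : Continuous (gauss d h) := by
  unfold gauss
  fun_prop
lemma integrable_gauss {h : ℝ} (hh : 0 < h) :
    Integrable (gauss d h) := by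
  have : gauss d h = fun z => (2 * π * h) ^ (-(d : ℝ) / 2) *
      Real.exp (-(1/(2*h)) * ‖z‖ ^ 2) := by
    funext z; simp only [gauss]; ring_nf
  rw [this]
  exact (integrable_exp_neg_norm_sq (by positivity)).const_mul _
lemma le_exp_sq_half (t : ℝ) : t ≤ Real.exp (t ^ 2 / 2) := by
  have h1 : t ≤ t ^ 2 / 2 + 1 := by nlinarith [sq_nonneg (t - 1)]
  exact h1.trans (Real.add_one_le_exp _)
lemma le_exp_sq (t : ℝ) : t ≤ Real.exp (t ^ 2) := by
  have h1 : t ≤ t ^ 2 + 1 := by nlinarith [sq_nonneg (t - 1)]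
  exact h1.trans (Real.add_one_le_exp _)
lemma norm_mul_exp_le {h : ℝ} (hh : 0 < h) (r : ℝ) (hr : 0 ≤ r) :
    r * Real.exp (-(1 / (4 * h)) * r ^ 2) ≤ 2 * Real.sqrt h := by
  have hs : 0 < Real.sqrt h := Real.sqrt_pos.2 hh
  have h2 : (r / (2 * Real.sqrt h)) ^ 2 = (1 / (4 * h)) * r ^ 2 := by
    rw [div_pow]
    rw [mul_pow]
    rw [Real.sq_sqrt hh.le]
    ring
  have := le_exp_sq (r / (2 * Real.sqrt h))
  rw [h2] at this
  have h3 : r ≤ 2 * Real.sqrt h * Real.exp ((1 / (4 * h)) * r ^ 2) := by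
    rw [div_le_iff₀ (by positivity)] at this
    linarith [this]
  calc r * Real.exp (-(1 / (4 * h)) * r ^ 2)
      ≤ (2 * Real.sqrt h * Real.exp ((1 / (4 * h)) * r ^ 2)) *
        Real.exp (-(1 / (4 * h)) * r ^ 2) := by
        exact mul_le_mul_of_nonneg_right h3 (Real.exp_pos _).le
    _ = 2 * Real.sqrt h := by
        rw [mul_assoc, ← Real.exp_add]
        ring_nf
        rw [Real.exp_zero]
        ring
lemma integrable_gauss_mul_norm {h : ℝ} (hh : 0 < h) :
    Integrable (fun z : EuclideanSpace ℝ (Fin d) => gauss d h z * ‖z‖) := by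
  have key : ∀ z : EuclideanSpace ℝ (Fin d),
      ‖gauss d h z * ‖z‖‖ ≤ (2 * π * h) ^ (-(d : ℝ) / 2) * (2 * Real.sqrt h) *
        Real.exp (-(1/(4*h)) * ‖z‖ ^ 2) := by
    intro z
    rw [Real.norm_eq_abs, abs_of_nonneg (mul_nonneg (gauss_nonneg hh z) (norm_nonneg z))]
    have e1 : gauss d h z * ‖z‖ = (2 * π * h) ^ (-(d : ℝ) / 2) *
        (Real.exp (-(1/(4*h)) * ‖z‖ ^ 2) * (‖z‖ * Real.exp (-(1/(4*h)) * ‖z‖ ^ 2))) := by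
      have hexp : Real.exp (-‖z‖ ^ 2 / (2 * h)) =
          Real.exp (-(1/(4*h)) * ‖z‖ ^ 2) * Real.exp (-(1/(4*h)) * ‖z‖ ^ 2) := by
        rw [← Real.exp_add]
        congr 1
        field_simp
        ring
      unfold gauss
      rw [hexp]
      ring
    rw [e1]
    have := norm_mul_exp_le hh ‖z‖ (norm_nonneg z)
    calc (2 * π * h) ^ (-(d : ℝ) / 2) *
        (Real.exp (-(1/(4*h)) * ‖z‖ ^ 2) * (‖z‖ * Real.exp (-(1/(4*h)) * ‖z‖ ^ 2)))
        ≤ (2 * π * h) ^ (-(d : ℝ) / 2) *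
          (Real.exp (-(1/(4*h)) * ‖z‖ ^ 2) * (2 * Real.sqrt h)) := by
          gcongr
      _ = (2 * π * h) ^ (-(d : ℝ) / 2) * (2 * Real.sqrt h) *
          Real.exp (-(1/(4*h)) * ‖z‖ ^ 2) := by ring
  refine Integrable.mono' ((integrable_exp_neg_norm_sq (by positivity)).const_mul
    ((2 * π * h) ^ (-(d : ℝ) / 2) * (2 * Real.sqrt h))) ?_ (Filter.Eventually.of_forall key)
  exact ((continuous_gauss h).mul continuous_norm).aestronglyMeasurable
lemma continuous_gradGauss (h : ℝ) : Continuous (gradGauss d h) := by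
  unfold gradGauss
  exact (((continuous_gauss h).neg.div_const h)).smul continuous_id
lemma norm_gradGauss {h : ℝ} (hh : 0 < h) (z : EuclideanSpace ℝ (Fin d)) :
    ‖gradGauss d h z‖ = gauss d h z * ‖z‖ / h := by
  unfold gradGauss
  rw [norm_smul, Real.norm_eq_abs, abs_div, abs_neg, abs_of_nonneg (gauss_nonneg hh z),
    abs_of_pos hh]
  ring
lemma integrable_gradGauss {h : ℝ} (hh : 0 < h) :
    Integrable (gradGauss d h) := by
  refine Integrable.mono' ((integrable_gauss_mul_norm hh).div_const h)
    (continuous_gradGauss h).aestronglyMeasurable (Filter.Eventually.of_forall fun z => ?_)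
  rw [norm_gradGauss hh z]
lemma gradGauss_neg (h : ℝ) (z : EuclideanSpace ℝ (Fin d)) :
    gradGauss d h (-z) = -gradGauss d h z := by
  unfold gradGauss
  rw [gauss_neg, smul_neg]
lemma integral_gradGauss (h : ℝ) :
    ∫ z, gradGauss d h z = 0 := by
  have h1 : ∫ z, gradGauss d h (-z) = ∫ z, gradGauss d h z := integral_neg_eq_self _ _
  simp only [gradGauss_neg, integral_neg] at h1
  have h2 : (∫ z, gradGauss d h z) + (∫ z, gradGauss d h z) = 0 := by
    nth_rewrite 1 [← h1]
    exact neg_add_cancel _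
  rw [← two_smul ℝ] at h2
  rcases smul_eq_zero.mp h2 with h3 | h3
  · norm_num at h3
  · exact h3
lemma gauss_half_eq {h : ℝ} (hh : 0 < h) (z : EuclideanSpace ℝ (Fin d)) :
    gauss d (h/2) z = (2:ℝ) ^ ((d:ℝ)/2) * gauss d h z * Real.exp (-‖z‖^2 / (2*h)) := by
  unfold gauss
  have h2 : (2:ℝ) * π * (h/2) = (2 * π * h) / 2 := by ring
  rw [h2, Real.div_rpow (by positivity) (by norm_num)]
  have h3 : (2:ℝ) ^ (-(d:ℝ)/2) = ((2:ℝ) ^ ((d:ℝ)/2))⁻¹ := by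
    rw [← Real.rpow_neg (by norm_num)]
    ring_nf
  have h4 : Real.exp (-‖z‖^2 / (2*(h/2))) =
      Real.exp (-‖z‖^2 / (2*h)) * Real.exp (-‖z‖^2 / (2*h)) := by
    rw [← Real.exp_add]
    congr 1
    field_simp
    ring
  rw [h3, h4]
  have h5 : (0:ℝ) < (2:ℝ) ^ ((d:ℝ)/2) := Real.rpow_pos_of_pos (by norm_num) _
  field_simp
lemma norm_gradGauss_half_le {h : ℝ} (hh : 0 < h) (z : EuclideanSpace ℝ (Fin d)) :
    ‖gradGauss d (h/2) z‖ ≤ 2 ^ ((d:ℝ)/2 + 1) * h ^ (-(1:ℝ)/2) * gauss d h z := by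
  rw [norm_gradGauss (by positivity) z, gauss_half_eq hh z]
  have hs : 0 < Real.sqrt h := Real.sqrt_pos.2 hh
  have key : ‖z‖ * Real.exp (-‖z‖^2 / (2*h)) ≤ Real.sqrt h := by
    have h2 : (‖z‖ / Real.sqrt h) ^ 2 / 2 = ‖z‖^2 / (2*h) := by
      rw [div_pow, Real.sq_sqrt hh.le]
      ring
    have := le_exp_sq_half (‖z‖ / Real.sqrt h)
    rw [h2] at this
    have h3 : ‖z‖ ≤ Real.sqrt h * Real.exp (‖z‖^2 / (2*h)) := by
      rw [div_le_iff₀ hs] at this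
      linarith
    calc ‖z‖ * Real.exp (-‖z‖^2 / (2*h))
        ≤ (Real.sqrt h * Real.exp (‖z‖^2 / (2*h))) * Real.exp (-‖z‖^2 / (2*h)) :=
          mul_le_mul_of_nonneg_right h3 (Real.exp_pos _).le
      _ = Real.sqrt h := by
          rw [mul_assoc, ← Real.exp_add]
          ring_nf
          rw [Real.exp_zero, mul_one]
  have hrw : h ^ (-(1:ℝ)/2) = (Real.sqrt h)⁻¹ := by
    rw [Real.sqrt_eq_rpow, ← Real.rpow_neg hh.le]
    norm_num
  have hpow : (2:ℝ) ^ ((d:ℝ)/2 + 1) = (2:ℝ) ^ ((d:ℝ)/2) * 2 := by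
    rw [Real.rpow_add (by norm_num), Real.rpow_one]
  have hg := gauss_nonneg hh z
  have h5 : (0:ℝ) < (2:ℝ) ^ ((d:ℝ)/2) := Real.rpow_pos_of_pos (by norm_num) _
  calc (2:ℝ) ^ ((d:ℝ)/2) * gauss d h z * Real.exp (-‖z‖^2 / (2*h)) * ‖z‖ / (h/2)
      = (2:ℝ) ^ ((d:ℝ)/2) * gauss d h z * (‖z‖ * Real.exp (-‖z‖^2 / (2*h))) * (2/h) := by
        field_simp
    _ ≤ (2:ℝ) ^ ((d:ℝ)/2) * gauss d h z * Real.sqrt h * (2/h) := by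
        gcongr
    _ = 2 ^ ((d:ℝ)/2 + 1) * h ^ (-(1:ℝ)/2) * gauss d h z := by
        rw [hpow, hrw]
        have hh2 : Real.sqrt h * Real.sqrt h = h := Real.mul_self_sqrt hh.le
        field_simp
        linear_combination gauss d h z * hh2
section translation
variable {Λ : ℝ}
noncomputable def latticeBasis (d : ℕ) (hΛ : 0 < Λ) : Module.Basis (Fin d) ℝ (EuclideanSpace ℝ (Fin d)) :=
  (EuclideanSpace.basisFun (Fin d) ℝ).toBasis.unitsSMul (fun _ => Units.mk0 Λ hΛ.ne')
lemma latticeBasis_apply (hΛ : 0 < Λ) (i : Fin d) :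
    latticeBasis d hΛ i = EuclideanSpace.single i Λ := by
  rw [latticeBasis, Module.Basis.unitsSMul_apply]
  simp only [OrthonormalBasis.coe_toBasis, EuclideanSpace.basisFun_apply]
  ext j
  simp only [PiLp.smul_apply, EuclideanSpace.single_apply, smul_eq_mul, Units.smul_def]
  split_ifs <;> simp [Units.mk0]
lemma box_eq_fundamentalDomain (hΛ : 0 < Λ) :
    box d Λ = ZSpan.fundamentalDomain (latticeBasis d hΛ) := by
  ext x
  simp only [box, Set.mem_setOf_eq, ZSpan.mem_fundamentalDomain, latticeBasis,
    Module.Basis.repr_unitsSMul, OrthonormalBasis.coe_toBasis_repr_apply,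
    EuclideanSpace.basisFun_repr, Set.mem_Ico, Units.smul_def, smul_eq_mul]
  refine forall_congr' fun i => ?_
  have h1 : ((Units.mk0 Λ hΛ.ne')⁻¹ : ℝˣ) = (Λ⁻¹ : ℝ) := rfl
  rw [h1]
  constructor
  · rintro ⟨h2, h3⟩
    refine ⟨by positivity, ?_⟩
    rw [← div_eq_inv_mul]
    exact (div_lt_one hΛ).mpr h3
  · rintro ⟨h2, h3⟩
    constructor
    · have h4 := mul_le_mul_of_nonneg_left h2 hΛ.le
      rw [mul_zero, ← mul_assoc, mul_inv_cancel₀ hΛ.ne', one_mul] at h4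
      exact h4
    · rw [← div_eq_inv_mul] at h3
      exact (div_lt_one hΛ).mp h3
end translation
lemma setIntegral_box_translate {Λ : ℝ} (hΛ : 0 < Λ) (F : EuclideanSpace ℝ (Fin d) → ℝ)
    (hper : ∀ x i, F (x + EuclideanSpace.single i Λ) = F x) (v : EuclideanSpace ℝ (Fin d)) :
    ∫ x in box d Λ, F (x + v) = ∫ x in box d Λ, F x := by
  classical
  set b := latticeBasis d hΛ with hb
  set G := Submodule.span ℤ (Set.range ⇑b) with hG
  have hfund : IsAddFundamentalDomain G (box d Λ) volume := by
    rw [box_eq_fundamentalDomain hΛ]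
    exact ZSpan.isAddFundamentalDomain b volume
  have hgen : ∀ i : Fin d, ∀ x, F (b i + x) = F x := by
    intro i x
    rw [hb, latticeBasis_apply hΛ i, add_comm]
    exact hper x i
  have hneg : ∀ y : EuclideanSpace ℝ (Fin d), (∀ x, F (y + x) = F x) →
      ∀ x, F (-y + x) = F x := by
    intro y hy x
    have := hy (-y + x)
    rw [← add_assoc, add_neg_cancel, zero_add] at this
    exact this.symm
  have hinv : ∀ l ∈ G, ∀ x, F (l + x) = F x := by
    intro l hl
    refine Submodule.span_induction ?_ ?_ ?_ ?_ hl
    · rintro y ⟨i, rfl⟩ x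
      exact hgen i x
    · intro x
      rw [zero_add]
    · intro y z _ _ hy hz x
      rw [add_assoc]
      rw [hy, hz]
    · intro a y _ hy
      induction a using Int.induction_on with
      | zero => intro x; rw [zero_smul, zero_add]
      | succ n ih =>
          intro x
          have e : ((n : ℤ) + 1) • y = (n : ℤ) • y + y := by
            rw [add_smul, one_smul]
          rw [e, add_assoc, ih, hy]
      | pred n ih =>
          intro x
          have e : (-(n : ℤ) - 1) • y = (-(n : ℤ)) • y + (-y) := by
            rw [sub_smul, one_smul, sub_eq_add_neg]
          rw [e, add_assoc, ih, hneg y hy]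
  have quasi : Measure.QuasiMeasurePreserving (⇑(Equiv.addRight v).symm)
      (volume : Measure (EuclideanSpace ℝ (Fin d))) volume := by
    have : MeasurePreserving (fun x : EuclideanSpace ℝ (Fin d) => x - v) volume volume :=
      measurePreserving_sub_right volume v
    exact this.quasiMeasurePreserving
  have hfund2 : IsAddFundamentalDomain G ((Equiv.addRight v) '' (box d Λ)) volume := by
    refine hfund.image_of_equiv (Equiv.addRight v) quasi (Equiv.refl _) fun g x => ?_
    show ((g : EuclideanSpace ℝ (Fin d)) + x) + v = (g : EuclideanSpace ℝ (Fin d)) + (x + v)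
    exact add_assoc _ _ _
  have h1 : ∫ x in box d Λ, F (x + v) = ∫ y in (Equiv.addRight v) '' (box d Λ), F y := by
    have hpre : (fun x : EuclideanSpace ℝ (Fin d) => x + v) ⁻¹'
        ((Equiv.addRight v) '' (box d Λ)) = box d Λ := by
      have : ((Equiv.addRight v) '' (box d Λ)) = (fun x => x + v) '' (box d Λ) := rfl
      rw [this, Set.preimage_image_eq _ (add_left_injective v)]
    have h1' := (measurePreserving_add_right volume v).setIntegral_preimage_emb
      (MeasurableEquiv.addRight v).measurableEmbedding F ((Equiv.addRight v) '' (box d Λ))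
    rw [hpre] at h1'
    exact h1'
  rw [h1]
  have i1 : MeasurableVAdd ↥G (EuclideanSpace ℝ (Fin d)) :=
    (inferInstance : MeasurableVAdd G.toAddSubgroup (EuclideanSpace ℝ (Fin d)))
  have i2 : VAddInvariantMeasure ↥G (EuclideanSpace ℝ (Fin d)) volume :=
    (inferInstance : VAddInvariantMeasure G.toAddSubgroup (EuclideanSpace ℝ (Fin d)) volume)
  exact hfund2.setIntegral_eq hfund (fun g x => hinv g g.2 x)

/-- For measurable `u : [0,Λ)^d → [0,1]`,
`∫|(∇G_{h/2})∗u| dx ≤ C h^{-1/2} ∫(1−u)(G_h∗u) dx` with `C = C(d)`. -/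
theorem stmt12 (d : ℕ) :
    ∃ C : ℝ, 0 < C ∧ ∀ (Λ h : ℝ), 0 < Λ → 0 < h →
      ∀ u : EuclideanSpace ℝ (Fin d) → ℝ, Measurable u →
        (∀ x, u x ∈ Set.Icc (0:ℝ) 1) →
        (∀ (x : EuclideanSpace ℝ (Fin d)) (i : Fin d),
          u (x + EuclideanSpace.single i Λ) = u x) →
      ∫ x in box d Λ, ‖gradConv d (h / 2) u x‖ ≤
        C * (h ^ (-(1:ℝ) / 2) * ∫ x in box d Λ, (1 - u x) * ∫ z, gauss d h z * u (x - z)) := by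
  refine ⟨(2:ℝ) ^ ((d:ℝ)/2 + 2), Real.rpow_pos_of_pos (by norm_num) _, ?_⟩
  intro Λ h hΛ hh u hu hrange hper
  have hu0 : ∀ x, 0 ≤ u x := fun x => (hrange x).1
  have hu1 : ∀ x, u x ≤ 1 := fun x => (hrange x).2
  have hh2 : (0:ℝ) < h / 2 := by positivity
  set κ : ℝ := (2:ℝ) ^ ((d:ℝ)/2 + 1) * h ^ (-(1:ℝ)/2) with hκ
  have hκ0 : 0 ≤ κ := by positivity
  set s : EuclideanSpace ℝ (Fin d) → EuclideanSpace ℝ (Fin d) → ℝ :=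
    fun x z => (1 - u x) * u (x - z) + u x * (1 - u (x - z)) with hs
  have hmeas_sub : Measurable fun p : EuclideanSpace ℝ (Fin d) × EuclideanSpace ℝ (Fin d) =>
      u (p.1 - p.2) := hu.comp (measurable_fst.sub measurable_snd)
  have hs_meas : Measurable (Function.uncurry s) :=
    ((measurable_const.sub (hu.comp measurable_fst)).mul hmeas_sub).add
      ((hu.comp measurable_fst).mul (measurable_const.sub hmeas_sub))
  have hs_nonneg : ∀ x z, 0 ≤ s x z := fun x z => by
    have := hu0 x; have := hu1 x; have := hu0 (x - z); have := hu1 (x - z)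
    simp only [hs]; nlinarith
  have hs_le : ∀ x z, s x z ≤ 2 := fun x z => by
    have := hu0 x; have := hu1 x; have := hu0 (x - z); have := hu1 (x - z)
    simp only [hs]; nlinarith
  have habs : ∀ x z, |u (x - z) - u x| ≤ s x z := fun x z => by
    have := hu0 x; have := hu1 x; have := hu0 (x - z); have := hu1 (x - z)
    rcases le_total (u (x - z)) (u x) with hc | hc
    · rw [abs_of_nonpos (by linarith)]; simp only [hs]; nlinarith
    · rw [abs_of_nonneg (by linarith)]; simp only [hs]; nlinarith
  set g : EuclideanSpace ℝ (Fin d) → ℝ := fun x => ∫ z, gauss d h z * s x z with hg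
  have int_gauss := integrable_gauss (d := d) hh
  have int_gG := integrable_gradGauss (d := d) hh2
  -- integrability of z ↦ u (x - z) • gradGauss
  have int1 : ∀ x, Integrable (fun z => u (x - z) • gradGauss d (h/2) z) := by
    intro x
    refine Integrable.mono' int_gG.norm ?_ (Filter.Eventually.of_forall fun z => ?_)
    · exact ((hu.comp (measurable_const.sub measurable_id)).smul
        (continuous_gradGauss (h/2)).measurable).aestronglyMeasurable
    · rw [norm_smul, Real.norm_eq_abs, abs_of_nonneg (hu0 _)]
      exact mul_le_of_le_one_left (norm_nonneg _) (hu1 _)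
  have int_diff : ∀ x, Integrable (fun z => (u (x - z) - u x) • gradGauss d (h/2) z) := by
    intro x
    simp only [sub_smul]
    exact (int1 x).sub (int_gG.smul (u x))
  have conv_eq : ∀ x, gradConv d (h/2) u x =
      ∫ z, (u (x - z) - u x) • gradGauss d (h/2) z := by
    intro x
    have e1 : ∫ z, (u (x - z) - u x) • gradGauss d (h/2) z =
        (∫ z, u (x - z) • gradGauss d (h/2) z) - ∫ z, u x • gradGauss d (h/2) z := by
      simp only [sub_smul]
      exact integral_sub (int1 x) (int_gG.smul (u x))
    rw [e1, integral_smul, integral_gradGauss, smul_zero, sub_zero]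
    rfl
  have int_sg : ∀ x, Integrable (fun z => s x z * (κ * gauss d h z)) := by
    intro x
    refine (int_gauss.const_mul κ).bdd_mul (c := 2) ?_ (Filter.Eventually.of_forall fun z => ?_)
    · exact (hs_meas.comp measurable_prodMk_left).aestronglyMeasurable
    · rw [Real.norm_eq_abs, abs_of_nonneg (hs_nonneg x z)]; exact hs_le x z
  have F1 : ∀ x, ‖gradConv d (h/2) u x‖ ≤ κ * g x := by
    intro x
    rw [conv_eq x]
    refine (norm_integral_le_integral_norm _).trans ?_
    have hle : ∀ z, ‖(u (x - z) - u x) • gradGauss d (h/2) z‖ ≤ s x z * (κ * gauss d h z) := by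
      intro z
      rw [norm_smul, Real.norm_eq_abs, hκ]
      exact mul_le_mul (habs x z) (norm_gradGauss_half_le hh z) (norm_nonneg _) (hs_nonneg x z)
    refine (integral_mono (int_diff x).norm (int_sg x) hle).trans ?_
    have : (fun z => s x z * (κ * gauss d h z)) = fun z => κ * (gauss d h z * s x z) := by
      funext z; ring
    rw [this, integral_const_mul]
  -- box facts
  have box_meas : MeasurableSet (box d Λ) := by
    rw [box_eq_fundamentalDomain hΛ]
    exact ZSpan.fundamentalDomain_measurableSet _
  have box_fin : volume (box d Λ) < ⊤ := by
    refine (measure_mono (?_ : box d Λ ⊆ Metric.closedBall 0 (Real.sqrt d * Λ))).trans_lt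
      measure_closedBall_lt_top
    intro x hx
    rw [Metric.mem_closedBall, dist_zero_right, EuclideanSpace.norm_eq]
    have hb : ∀ i, ‖x i‖ ^ 2 ≤ Λ ^ 2 := by
      intro i
      have h1 := (hx i).1; have h2 := (hx i).2
      rw [Real.norm_eq_abs, abs_of_nonneg h1]
      nlinarith
    calc Real.sqrt (∑ i, ‖x i‖ ^ 2) ≤ Real.sqrt (∑ _i : Fin d, Λ ^ 2) :=
          Real.sqrt_le_sqrt (Finset.sum_le_sum fun i _ => hb i)
      _ = Real.sqrt ((d : ℝ) * Λ ^ 2) := by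
          rw [Finset.sum_const, Finset.card_univ, Fintype.card_fin, nsmul_eq_mul]
      _ = Real.sqrt d * Λ := by
          rw [Real.sqrt_mul (Nat.cast_nonneg d), Real.sqrt_sq hΛ.le]
  have intOn : ∀ (f : EuclideanSpace ℝ (Fin d) → ℝ) (M : ℝ),
      AEStronglyMeasurable f (volume.restrict (box d Λ)) → (∀ x, ‖f x‖ ≤ M) →
      IntegrableOn f (box d Λ) := by
    intro f M hf hbd
    exact Integrable.mono' (integrableOn_const (C := M) box_fin.ne) hf
      (Filter.Eventually.of_forall hbd)
  set M : ℝ := ∫ z, gauss d h z with hM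
  -- helper for functions of the form x ↦ ∫ z, gauss * w x z
  have Jmeas : ∀ w : EuclideanSpace ℝ (Fin d) → EuclideanSpace ℝ (Fin d) → ℝ,
      Measurable (Function.uncurry w) →
      StronglyMeasurable (fun x => ∫ z, gauss d h z * w x z) := by
    intro w hw
    exact (((continuous_gauss h).measurable.comp measurable_snd).mul
      hw).stronglyMeasurable.integral_prod_right'
  have Jint : ∀ w : EuclideanSpace ℝ (Fin d) → EuclideanSpace ℝ (Fin d) → ℝ, ∀ x,
      Measurable (Function.uncurry w) → (∀ x z, 0 ≤ w x z) → (∀ x z, w x z ≤ 1) →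
      Integrable (fun z => gauss d h z * w x z) := by
    intro w x hw hw0 hw1
    have e : (fun z => gauss d h z * w x z) = fun z => w x z * gauss d h z := by
      funext z; ring
    rw [e]
    refine int_gauss.bdd_mul (c := 1) ((hw.comp measurable_prodMk_left).aestronglyMeasurable) (Filter.Eventually.of_forall fun z => ?_)
    rw [Real.norm_eq_abs, abs_of_nonneg (hw0 x z)]
    exact hw1 x z
  have swap : ∀ w : EuclideanSpace ℝ (Fin d) → EuclideanSpace ℝ (Fin d) → ℝ,
      Measurable (Function.uncurry w) → (∀ x z, 0 ≤ w x z) → (∀ x z, w x z ≤ 1) →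
      ∫ x in box d Λ, (∫ z, gauss d h z * w x z) =
        ∫ z, (∫ x in box d Λ, gauss d h z * w x z) := by
    intro w hw hw0 hw1
    refine integral_integral_swap ?_
    have hb : Integrable (fun p : EuclideanSpace ℝ (Fin d) × EuclideanSpace ℝ (Fin d) =>
        (1:ℝ) * gauss d h p.2) ((volume.restrict (box d Λ)).prod volume) :=
      Integrable.mul_prod (integrableOn_const (C := (1:ℝ)) box_fin.ne) int_gauss
    refine Integrable.mono' hb ?_ (Filter.Eventually.of_forall fun p => ?_)
    · exact (((continuous_gauss h).measurable.comp measurable_snd).mul hw).aestronglyMeasurable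
    · simp only [Function.uncurry]
      rw [Real.norm_eq_abs, abs_of_nonneg (mul_nonneg (gauss_nonneg hh _) (hw0 _ _)), one_mul]
      calc gauss d h p.2 * w p.1 p.2 ≤ gauss d h p.2 * 1 :=
            mul_le_mul_of_nonneg_left (hw1 _ _) (gauss_nonneg hh _)
        _ = gauss d h p.2 := mul_one _
  set w1 : EuclideanSpace ℝ (Fin d) → EuclideanSpace ℝ (Fin d) → ℝ :=
    fun x z => (1 - u x) * u (x - z) with hw1def
  set w2 : EuclideanSpace ℝ (Fin d) → EuclideanSpace ℝ (Fin d) → ℝ :=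
    fun x z => u x * (1 - u (x - z)) with hw2def
  have w1_meas : Measurable (Function.uncurry w1) :=
    (measurable_const.sub (hu.comp measurable_fst)).mul hmeas_sub
  have w2_meas : Measurable (Function.uncurry w2) :=
    (hu.comp measurable_fst).mul (measurable_const.sub hmeas_sub)
  have w1_0 : ∀ x z, 0 ≤ w1 x z := fun x z =>
    mul_nonneg (by linarith [hu1 x]) (hu0 _)
  have w1_1 : ∀ x z, w1 x z ≤ 1 := fun x z => by
    have := hu0 x; have := hu1 x; have := hu0 (x - z); have := hu1 (x - z)
    simp only [hw1def]; nlinarith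
  have w2_0 : ∀ x z, 0 ≤ w2 x z := fun x z =>
    mul_nonneg (hu0 _) (by linarith [hu1 (x - z)])
  have w2_1 : ∀ x z, w2 x z ≤ 1 := fun x z => by
    have := hu0 x; have := hu1 x; have := hu0 (x - z); have := hu1 (x - z)
    simp only [hw2def]; nlinarith
  -- bounds for J-type functions
  have Jbd : ∀ w : EuclideanSpace ℝ (Fin d) → EuclideanSpace ℝ (Fin d) → ℝ,
      Measurable (Function.uncurry w) → (∀ x z, 0 ≤ w x z) → (∀ x z, w x z ≤ 1) →
      ∀ x, ‖∫ z, gauss d h z * w x z‖ ≤ M := by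
    intro w hw hw0 hww1 x
    rw [Real.norm_eq_abs, abs_of_nonneg (integral_nonneg fun z =>
      mul_nonneg (gauss_nonneg hh _) (hw0 x _))]
    refine (integral_mono (Jint w x hw hw0 hww1) int_gauss fun z => ?_)
    calc gauss d h z * w x z ≤ gauss d h z * 1 :=
          mul_le_mul_of_nonneg_left (hww1 x z) (gauss_nonneg hh _)
      _ = gauss d h z := mul_one _
  have JintOn : ∀ w : EuclideanSpace ℝ (Fin d) → EuclideanSpace ℝ (Fin d) → ℝ,
      Measurable (Function.uncurry w) → (∀ x z, 0 ≤ w x z) → (∀ x z, w x z ≤ 1) →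
      IntegrableOn (fun x => ∫ z, gauss d h z * w x z) (box d Λ) := by
    intro w hw hw0 hww1
    exact intOn _ M ((Jmeas w hw).aestronglyMeasurable.restrict) (Jbd w hw hw0 hww1)
  -- split g
  have g_split : ∀ x, g x = (∫ z, gauss d h z * w1 x z) + ∫ z, gauss d h z * w2 x z := by
    intro x
    have e2 : g x = ∫ z, gauss d h z * s x z := rfl
    have e : (fun z => gauss d h z * s x z) =
        fun z => gauss d h z * w1 x z + gauss d h z * w2 x z := by
      funext z; simp only [hs, hw1def, hw2def]; ring
    rw [e2, e]
    exact integral_add (Jint w1 x w1_meas w1_0 w1_1) (Jint w2 x w2_meas w2_0 w2_1)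
  have box_split : ∫ x in box d Λ, g x =
      (∫ x in box d Λ, ∫ z, gauss d h z * w1 x z) +
        ∫ x in box d Λ, ∫ z, gauss d h z * w2 x z := by
    rw [← integral_add (JintOn w1 w1_meas w1_0 w1_1) (JintOn w2 w2_meas w2_0 w2_1)]
    exact integral_congr_ae (Filter.Eventually.of_forall fun x => g_split x)
  -- T2 = T1 via translation and reflection
  have T2_eq_T1 : (∫ x in box d Λ, ∫ z, gauss d h z * w2 x z) =
      ∫ x in box d Λ, ∫ z, gauss d h z * w1 x z := by
    rw [swap w2 w2_meas w2_0 w2_1, swap w1 w1_meas w1_0 w1_1]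
    have e2 : ∀ z, (∫ x in box d Λ, gauss d h z * w2 x z) =
        gauss d h z * ∫ x in box d Λ, w2 x z := fun z => integral_const_mul _ _
    have e1 : ∀ z, (∫ x in box d Λ, gauss d h z * w1 x z) =
        gauss d h z * ∫ x in box d Λ, w1 x z := fun z => integral_const_mul _ _
    simp only [e2, e1]
    -- translate the inner integral of w2
    have trans : ∀ z, (∫ x in box d Λ, w2 x z) =
        ∫ x in box d Λ, u (x + z) * (1 - u x) := by
      intro z
      set F : EuclideanSpace ℝ (Fin d) → ℝ := fun y => u (y + z) * (1 - u y) with hF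
      have hFper : ∀ y i, F (y + EuclideanSpace.single i Λ) = F y := by
        intro y i
        simp only [hF]
        rw [add_right_comm, hper, hper]
      have := setIntegral_box_translate hΛ F hFper (-z)
      have e : ∀ x : EuclideanSpace ℝ (Fin d), F (x + (-z)) = w2 x z := by
        intro x
        simp only [hF, hw2def]
        rw [← sub_eq_add_neg, sub_add_cancel]
      rw [← this]
      exact integral_congr_ae (Filter.Eventually.of_forall fun x => (e x).symm)
    simp only [trans]
    -- reflection z ↦ -z
    have refl : (∫ z, gauss d h z * ∫ x in box d Λ, u (x + z) * (1 - u x)) =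
        ∫ z, gauss d h z * ∫ x in box d Λ, w1 x z := by
      have := integral_neg_eq_self
        (fun z => gauss d h z * ∫ x in box d Λ, w1 x z) (volume : Measure (EuclideanSpace ℝ (Fin d)))
      rw [← this]
      refine integral_congr_ae (Filter.Eventually.of_forall fun z => ?_)
      beta_reduce
      rw [gauss_neg]
      congr 1
      refine integral_congr_ae (Filter.Eventually.of_forall fun x => ?_)
      beta_reduce
      simp only [hw1def]
      rw [sub_neg_eq_add]
      ring
    exact refl
  -- T1 equals the target integral A
  have T1_eq : (∫ x in box d Λ, ∫ z, gauss d h z * w1 x z) =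
      ∫ x in box d Λ, (1 - u x) * ∫ z, gauss d h z * u (x - z) := by
    refine integral_congr_ae (Filter.Eventually.of_forall fun x => ?_)
    beta_reduce
    have e : (fun z => gauss d h z * w1 x z) =
        fun z => (1 - u x) * (gauss d h z * u (x - z)) := by
      funext z; simp only [hw1def]; ring
    rw [e, integral_const_mul]
  -- put everything together
  have g_nonneg : ∀ x, 0 ≤ g x := fun x =>
    integral_nonneg fun z => mul_nonneg (gauss_nonneg hh z) (hs_nonneg x z)
  have g_le : ∀ x, g x ≤ 2 * M := by
    intro x
    rw [g_split x]
    have b1 := Jbd w1 w1_meas w1_0 w1_1 x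
    have b2 := Jbd w2 w2_meas w2_0 w2_1 x
    rw [Real.norm_eq_abs] at b1 b2
    have l1 := le_abs_self (∫ z, gauss d h z * w1 x z)
    have l2 := le_abs_self (∫ z, gauss d h z * w2 x z)
    linarith
  have int_g_box : IntegrableOn g (box d Λ) := by
    refine intOn g (2 * M) ((Jmeas s hs_meas).aestronglyMeasurable.restrict) fun x => ?_
    rw [Real.norm_eq_abs, abs_of_nonneg (g_nonneg x)]
    exact g_le x
  have int_conv_box : IntegrableOn (fun x => ‖gradConv d (h/2) u x‖) (box d Λ) := by
    refine intOn _ (κ * (2 * M)) ?_ fun x => ?_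
    · have sm : StronglyMeasurable (gradConv d (h/2) u) :=
        (hmeas_sub.smul ((continuous_gradGauss (h/2)).measurable.comp
          measurable_snd)).stronglyMeasurable.integral_prod_right'
      exact sm.norm.aestronglyMeasurable.restrict
    · rw [norm_norm]
      exact (F1 x).trans (mul_le_mul_of_nonneg_left (g_le x) hκ0)
  have step1 : ∫ x in box d Λ, ‖gradConv d (h/2) u x‖ ≤ κ * ∫ x in box d Λ, g x := by
    have := setIntegral_mono_on int_conv_box (int_g_box.const_mul κ) box_meas
      (fun x _ => F1 x)
    rwa [integral_const_mul] at this
  have hC : (2:ℝ) ^ ((d:ℝ)/2 + 2) = (2:ℝ) ^ ((d:ℝ)/2 + 1) * 2 := by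
    rw [show ((d:ℝ)/2 + 2) = ((d:ℝ)/2 + 1) + 1 by ring, Real.rpow_add (by norm_num),
      Real.rpow_one]
  refine step1.trans ?_
  rw [box_split, T2_eq_T1, T1_eq]
  refine le_of_eq ?_
  rw [hκ, hC]
  ring
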